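/- Let α > 0. If α < 2γ₀, then β = α/2 is the unique β ∈ (0, α) with λ'(β) = λ'(α − β). If α ≥ 2γ₀, then there is a unique p = p_{++2}(α) ∈ (0, γ₀] with λ'(p) = λ'(α − p), and the set {β ∈ (0, α) : λ'(β) = λ'(α − β)} equals {α/2, p, α − p}. -/

import Mathlib

/-!
`lam` is the gravity–capillary dispersion relation λ(x) = √(x + x³) (with g = σ = 1);
λ' denotes its derivative on (0, ∞); `gamma0` is γ₀ = √((2√3 − 3)/3).
-/

noncomputable section

open Real Set

/-- The dispersion relation λ(x) = √(x + x³). -/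
def lam (x : ℝ) : ℝ := Real.sqrt (x + x ^ 3)

/-- γ₀ = √((2√3 − 3)/3). -/
def gamma0 : ℝ := Real.sqrt ((2 * Real.sqrt 3 - 3) / 3)

/-!
Since `λ'(x)² = (1 + 3x²)² / (4(x + x³))`, clearing denominators turns `λ'(β) = λ'(α - β)`
into `(α - 2β) · C(α², β(α - β)) = 0` for an explicit cubic `C(t, u)` (`symCubic`). For fixed
`t` the cubic `C(t, ·)` is strictly decreasing on `[0, t/4]`, from `C(t, 0) = 1 + t > 0` to
`C(t, t/4)`, whose sign is that of `2γ₀ - α` when `t = α²`. Hence besides `β = α/2` there is no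
solution when `α < 2γ₀`, and exactly one pair `p, α - p` with `p ≤ α/2` when `α ≥ 2γ₀`. That
`p ≤ γ₀` comes from `γ₀` being the minimum of `λ'`: `λ'` is strictly increasing on `[γ₀, ∞)`,
so `p < α - p` cannot both lie there.
-/

lemma hasDerivAt_lam {x : ℝ} (hx : 0 < x) :
    HasDerivAt lam ((1 + 3 * x ^ 2) / (2 * √(x + x ^ 3))) x := by
  have hpoly : HasDerivAt (fun y : ℝ => y + y ^ 3) (1 + 3 * x ^ 2) x :=
    ((hasDerivAt_id x).add (hasDerivAt_pow 3 x)).congr_deriv (by push_cast; ring)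
  exact hpoly.sqrt (by positivity)

def lamDerivSq (x : ℝ) : ℝ := (1 + 3 * x ^ 2) ^ 2 / (4 * (x + x ^ 3))

lemma deriv_lam_eq_sqrt_lamDerivSq {x : ℝ} (hx : 0 < x) :
    deriv lam x = √(lamDerivSq x) := by
  have hB : 0 < x + x ^ 3 := by positivity
  rw [(hasDerivAt_lam hx).deriv, eq_comm, sqrt_eq_iff_eq_sq (by unfold lamDerivSq; positivity)
    (by positivity), lamDerivSq, div_pow, mul_pow, sq_sqrt hB.le]
  ring

lemma deriv_lam_eq_deriv_lam_iff {a b : ℝ} (ha : 0 < a) (hb : 0 < b) :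
    deriv lam a = deriv lam b ↔ lamDerivSq a = lamDerivSq b := by
  rw [deriv_lam_eq_sqrt_lamDerivSq ha, deriv_lam_eq_sqrt_lamDerivSq hb,
    sqrt_inj (by unfold lamDerivSq; positivity) (by unfold lamDerivSq; positivity)]

lemma hasDerivAt_lamDerivSq {x : ℝ} (hx : 0 < x) :
    HasDerivAt lamDerivSq
      ((1 + 3 * x ^ 2) * (3 * x ^ 4 + 6 * x ^ 2 - 1) / (4 * (x + x ^ 3) ^ 2)) x := by
  have hnum : HasDerivAt (fun y : ℝ => (1 + 3 * y ^ 2) ^ 2) (2 * (1 + 3 * x ^ 2) * (6 * x)) x :=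
    ((((hasDerivAt_pow 2 x).const_mul 3).const_add 1).pow 2).congr_deriv (by push_cast; ring)
  have hden : HasDerivAt (fun y : ℝ => 4 * (y + y ^ 3)) (4 * (1 + 3 * x ^ 2)) x :=
    (((hasDerivAt_id x).add (hasDerivAt_pow 3 x)).const_mul 4).congr_deriv (by push_cast; ring)
  exact (hnum.div hden (by positivity)).congr_deriv (by field_simp; ring)

lemma gamma0_pos : 0 < gamma0 := by
  have : (3 : ℝ) / 2 < √3 := by
    rw [lt_sqrt (by norm_num)]
    norm_num
  exact sqrt_pos.mpr (by linarith)

lemma gamma0_quartic_eq_zero : 3 * gamma0 ^ 4 + 6 * gamma0 ^ 2 - 1 = 0 := by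
  have h3 : √3 ^ 2 = 3 := sq_sqrt (by norm_num)
  have hγ : gamma0 ^ 2 = (2 * √3 - 3) / 3 := sq_sqrt (by nlinarith [sqrt_nonneg 3])
  rw [show gamma0 ^ 4 = (gamma0 ^ 2) ^ 2 by ring, hγ]
  linear_combination (4 / 3 : ℝ) * h3

lemma lamDerivSq_strictMonoOn : StrictMonoOn lamDerivSq (Ici gamma0) := by
  have hderiv : ∀ x ∈ Ici gamma0, HasDerivAt lamDerivSq
      ((1 + 3 * x ^ 2) * (3 * x ^ 4 + 6 * x ^ 2 - 1) / (4 * (x + x ^ 3) ^ 2)) x :=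
    fun x hx => hasDerivAt_lamDerivSq (gamma0_pos.trans_le (mem_Ici.mp hx))
  refine strictMonoOn_of_hasDerivWithinAt_pos (convex_Ici _)
    (fun x hx => (hderiv x hx).continuousAt.continuousWithinAt)
    (fun x hx => (hderiv x (interior_subset hx)).hasDerivWithinAt) fun x hx => ?_
  rw [interior_Ici, mem_Ioi] at hx
  have hx0 : 0 < x := gamma0_pos.trans hx
  have hfactor :
      3 * x ^ 4 + 6 * x ^ 2 - 1 = 3 * (x ^ 2 - gamma0 ^ 2) * (x ^ 2 + gamma0 ^ 2 + 2) := by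
    linear_combination gamma0_quartic_eq_zero
  have hsq : gamma0 ^ 2 < x ^ 2 := pow_lt_pow_left₀ hx gamma0_pos.le two_ne_zero
  have : 0 < 3 * x ^ 4 + 6 * x ^ 2 - 1 := by
    rw [hfactor]
    exact mul_pos (mul_pos three_pos (by linarith)) (by positivity)
  positivity

def symCubic (t u : ℝ) : ℝ := 1 + t - (7 + 9 * t) * u + 15 * u ^ 2 - 9 * u ^ 3

lemma lamDerivSq_sub_lamDerivSq_sub {α β : ℝ} (hβ : 0 < β) (hβα : β < α) :
    lamDerivSq β - lamDerivSq (α - β) = (α - 2 * β) * symCubic (α ^ 2) (β * (α - β)) /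
      (4 * (β + β ^ 3) * ((α - β) + (α - β) ^ 3)) := by
  have hαβ : 0 < α - β := sub_pos.mpr hβα
  unfold lamDerivSq symCubic
  field_simp
  ring

lemma deriv_lam_eq_deriv_lam_sub_iff {α β : ℝ} (hβ : β ∈ Ioo 0 α) :
    deriv lam β = deriv lam (α - β) ↔ β = α / 2 ∨ symCubic (α ^ 2) (β * (α - β)) = 0 := by
  have hαβ : 0 < α - β := sub_pos.mpr hβ.2
  rw [deriv_lam_eq_deriv_lam_iff hβ.1 hαβ, ← sub_eq_zero, lamDerivSq_sub_lamDerivSq_sub hβ.1 hβ.2,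
    div_eq_zero_iff, or_iff_left (by have := hβ.1; positivity), mul_eq_zero]
  exact or_congr_left ⟨fun h => by linarith, fun h => by linarith⟩

lemma symCubic_strictAntiOn (t : ℝ) : StrictAntiOn (symCubic t) (Icc 0 (t / 4)) := by
  intro u hu v hv huv
  have hslope : 0 < 9 * t + 7 - 15 * (u + v) + 9 * (u ^ 2 + u * v + v ^ 2) := by
    nlinarith [hu.1, hv.2]
  have hdiff : symCubic t u - symCubic t v
      = (v - u) * (9 * t + 7 - 15 * (u + v) + 9 * (u ^ 2 + u * v + v ^ 2)) := by
    unfold symCubic; ring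
  linarith [mul_pos (sub_pos.mpr huv) hslope]

lemma symCubic_sq_quarter (α : ℝ) : symCubic (α ^ 2) (α ^ 2 / 4) =
    3 * (3 * α ^ 2 + 4) * (α + 2 * gamma0) * (α ^ 2 + 8 + 4 * gamma0 ^ 2) / 64 *
      (2 * gamma0 - α) := by
  unfold symCubic
  linear_combination (-(3 * α ^ 2 + 4) / 4 : ℝ) * gamma0_quartic_eq_zero

lemma symCubic_sq_quarter_eq_zero_iff {α : ℝ} (hα : 0 < α) :
    symCubic (α ^ 2) (α ^ 2 / 4) = 0 ↔ α = 2 * gamma0 := by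
  have := gamma0_pos
  rw [symCubic_sq_quarter, mul_eq_zero, or_iff_right (by positivity), sub_eq_zero, eq_comm]

lemma symCubic_sq_mul_strictAntiOn (α : ℝ) :
    StrictAntiOn (fun β => symCubic (α ^ 2) (β * (α - β))) (Icc 0 (α / 2)) := by
  refine (symCubic_strictAntiOn _).comp_strictMonoOn ?_ fun β hβ => ⟨?_, ?_⟩
  · intro a ha b hb hab
    nlinarith [ha.1, hb.2]
  · nlinarith [hβ.1, hβ.2]
  · nlinarith [sq_nonneg (α - 2 * β)]

lemma symCubic_sq_quarter_le {α β : ℝ} (hβ : β ∈ Icc 0 α) :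
    symCubic (α ^ 2) (α ^ 2 / 4) ≤ symCubic (α ^ 2) (β * (α - β)) :=
  (symCubic_strictAntiOn _).antitoneOn
    ⟨mul_nonneg hβ.1 (sub_nonneg.mpr hβ.2), by nlinarith [sq_nonneg (α - 2 * β)]⟩
    ⟨by positivity, le_rfl⟩ (by nlinarith [sq_nonneg (α - 2 * β)])

lemma symCubic_sq_mul_pos {α β : ℝ} (hα : 0 < α) (hlt : α < 2 * gamma0) (hβ : β ∈ Icc 0 α) :
    0 < symCubic (α ^ 2) (β * (α - β)) := by
  refine lt_of_lt_of_le ?_ (symCubic_sq_quarter_le hβ)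
  rw [symCubic_sq_quarter]
  have := gamma0_pos
  exact mul_pos (by positivity) (by linarith)

lemma exists_symCubic_sq_mul_eq_zero {α : ℝ} (hα : 0 < α) (hle : 2 * gamma0 ≤ α) :
    ∃ p ∈ Ioc 0 (α / 2), symCubic (α ^ 2) (p * (α - p)) = 0 := by
  have hcont : ContinuousOn (fun β => symCubic (α ^ 2) (β * (α - β))) (Icc 0 (α / 2)) := by
    unfold symCubic
    fun_prop
  have hend : symCubic (α ^ 2) (α / 2 * (α - α / 2)) ≤ 0 := by
    rw [show α / 2 * (α - α / 2) = α ^ 2 / 4 by ring, symCubic_sq_quarter]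
    have := gamma0_pos
    exact mul_nonpos_of_nonneg_of_nonpos (by positivity) (by linarith)
  have hstart : 0 < symCubic (α ^ 2) (0 * (α - 0)) := by
    norm_num [symCubic]
    positivity
  obtain ⟨p, hp, hroot⟩ :=
    intermediate_value_Icc' (by positivity) hcont ⟨hend, hstart.le⟩
  refine ⟨p, ⟨lt_of_le_of_ne hp.1 ?_, hp.2⟩, hroot⟩
  rintro rfl
  exact hstart.ne' hroot

lemma eq_or_eq_sub_of_symCubic_sq_mul_eq_zero {α p β : ℝ} (hp : p ∈ Icc 0 (α / 2))
    (hp_root : symCubic (α ^ 2) (p * (α - p)) = 0) (hβ : β ∈ Icc 0 α)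
    (hβ_root : symCubic (α ^ 2) (β * (α - β)) = 0) : β = p ∨ β = α - p := by
  rcases le_total β (α / 2) with hβα | hβα
  · exact Or.inl <| (symCubic_sq_mul_strictAntiOn α).injOn ⟨hβ.1, hβα⟩ hp
      (hβ_root.trans hp_root.symm)
  · have hsym : symCubic (α ^ 2) ((α - β) * (α - (α - β))) = symCubic (α ^ 2) (p * (α - p)) := by
      rw [show (α - β) * (α - (α - β)) = β * (α - β) by ring, hβ_root, hp_root]
    have := (symCubic_sq_mul_strictAntiOn α).injOn ⟨sub_nonneg.mpr hβ.2, by linarith⟩ hp hsym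
    exact Or.inr (by linarith)

lemma setOf_deriv_lam_eq_deriv_lam_sub {α p : ℝ} (hp : p ∈ Ioc 0 (α / 2))
    (hp_root : symCubic (α ^ 2) (p * (α - p)) = 0) :
    {β : ℝ | β ∈ Ioo 0 α ∧ deriv lam β = deriv lam (α - β)} = {α / 2, p, α - p} := by
  have hα : 0 < α := by linarith [hp.1, hp.2]
  ext β
  simp only [mem_ofPred_eq, mem_insert_iff, mem_singleton_iff]
  constructor
  · rintro ⟨hβ, hsol⟩
    rcases (deriv_lam_eq_deriv_lam_sub_iff hβ).1 hsol with hhalf | hβ_root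
    · exact Or.inl hhalf
    · exact Or.inr (eq_or_eq_sub_of_symCubic_sq_mul_eq_zero (Ioc_subset_Icc_self hp) hp_root
        (Ioo_subset_Icc_self hβ) hβ_root)
  · rintro (rfl | rfl | rfl)
    · exact ⟨⟨by positivity, by linarith⟩, by rw [sub_half]⟩
    · have hβ : β ∈ Ioo 0 α := ⟨hp.1, by linarith [hp.2]⟩
      exact ⟨hβ, (deriv_lam_eq_deriv_lam_sub_iff hβ).2 (Or.inr hp_root)⟩
    · have hβ : α - p ∈ Ioo 0 α := ⟨by linarith [hp.2], by linarith [hp.1]⟩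
      refine ⟨hβ, (deriv_lam_eq_deriv_lam_sub_iff hβ).2 (Or.inr ?_)⟩
      rwa [show (α - p) * (α - (α - p)) = p * (α - p) by ring]

lemma le_gamma0_of_symCubic_sq_mul_eq_zero {α p : ℝ} (hp : p ∈ Ioc 0 (α / 2))
    (hp_root : symCubic (α ^ 2) (p * (α - p)) = 0) : p ≤ gamma0 := by
  by_contra! hγp
  have hsol : lamDerivSq p = lamDerivSq (α - p) := by
    rw [← deriv_lam_eq_deriv_lam_iff hp.1 (by linarith [hp.1, hp.2]),
      deriv_lam_eq_deriv_lam_sub_iff ⟨hp.1, by linarith [hp.1, hp.2]⟩]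
    exact Or.inr hp_root
  have hhalf : p = α / 2 := by
    have := lamDerivSq_strictMonoOn.injOn hγp.le (by linarith [hp.2] : gamma0 ≤ α - p) hsol
    linarith
  rw [hhalf, show α / 2 * (α - α / 2) = α ^ 2 / 4 by ring,
    symCubic_sq_quarter_eq_zero_iff (by linarith [hp.1])] at hp_root
  linarith

/-- If α < 2γ₀ then β = α/2 is the unique β ∈ (0, α) with λ'(β) = λ'(α − β); if α ≥ 2γ₀
then there is a unique p = p₊₊₂(α) ∈ (0, γ₀] with λ'(p) = λ'(α − p), and the solution set
{β ∈ (0, α) : λ'(β) = λ'(α − β)} equals {α/2, p, α − p}. -/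
theorem stmt9 (α : ℝ) (hα : 0 < α) :
    (α < 2 * gamma0 →
      ∀ β ∈ Ioo 0 α, (deriv lam β = deriv lam (α - β) ↔ β = α / 2)) ∧
    (2 * gamma0 ≤ α →
      ∃ p : ℝ, p ∈ Ioc 0 gamma0 ∧ deriv lam p = deriv lam (α - p) ∧
        (∀ q ∈ Ioc 0 gamma0, deriv lam q = deriv lam (α - q) → q = p) ∧
        {β : ℝ | β ∈ Ioo 0 α ∧ deriv lam β = deriv lam (α - β)} = {α / 2, p, α - p}) := by
  refine ⟨fun hlt β hβ => ?_, fun hle => ?_⟩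
  · rw [deriv_lam_eq_deriv_lam_sub_iff hβ,
      or_iff_left (symCubic_sq_mul_pos hα hlt (Ioo_subset_Icc_self hβ)).ne']
  obtain ⟨p, hp, hp_root⟩ := exists_symCubic_sq_mul_eq_zero hα hle
  have hS := setOf_deriv_lam_eq_deriv_lam_sub hp hp_root
  have hp_sol : p ∈ {β : ℝ | β ∈ Ioo 0 α ∧ deriv lam β = deriv lam (α - β)} := by
    rw [hS]; exact Or.inr (Or.inl rfl)
  refine ⟨p, ⟨hp.1, le_gamma0_of_symCubic_sq_mul_eq_zero hp hp_root⟩, hp_sol.2,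
    fun q hq hq_sol => ?_, hS⟩
  have hqα : q ∈ Ioo 0 α := ⟨hq.1, by linarith [hq.2, gamma0_pos]⟩
  have hq_root : symCubic (α ^ 2) (q * (α - q)) = 0 := by
    rcases (deriv_lam_eq_deriv_lam_sub_iff hqα).1 hq_sol with hhalf | hq_root
    · rw [hhalf, show α / 2 * (α - α / 2) = α ^ 2 / 4 by ring,
        symCubic_sq_quarter_eq_zero_iff hα]
      linarith [hq.2]
    · exact hq_root
  rcases eq_or_eq_sub_of_symCubic_sq_mul_eq_zero (Ioc_subset_Icc_self hp) hp_root
    (Ioo_subset_Icc_self hqα) hq_root with h | h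
  · exact h
  · linarith [hq.2, hp.2]

end
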